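/- Let N ≥ 1 and m ≥ 1 be integers. Then (N+1)/2^N ≤ P(M_{2N}^{(m)} ≥ N−1) ≤ (N+2)/2^N, where M_{2N}^{(m)} ≥ N−1 is the event that some block of N consecutive tosses within X_m, …, X_{m+2N−1} is alternating. -/

import Mathlib

open MeasureTheory ProbabilityTheory Filter

/-- The block of `k + 1` consecutive tosses `X m, …, X (m + k)` (0-based indices) is
alternating, i.e. it contains `k` switches: every adjacent pair differs. -/
def AltBlock {Ω : Type*} (X : ℕ → Ω → Bool) (ω : Ω) (m k : ℕ) : Prop :=
  ∀ i, m ≤ i → i < m + k → X i ω ≠ X (i + 1) ω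

/-- `M_N^{(s+1)}` in the paper's (1-based) notation: the number of switches in the longest
run of consecutive switches in the window `X s, …, X (s + N - 1)` (0-based start `s`),
i.e. the largest `k` such that some block of `k + 1` consecutive tosses within the window
is alternating. -/
noncomputable def longestSwitchIn {Ω : Type*} (X : ℕ → Ω → Bool) (s N : ℕ) (ω : Ω) : ℕ :=
  sSup {k | ∃ m, s ≤ m ∧ m + k + 1 ≤ s + N ∧ AltBlock X ω m k}

/-- `M_N`: the number of switches in the longest run of consecutive switches among the
first `N` tosses `X 0, …, X (N - 1)` (0-based indexing of the paper's `X_1, …, X_N`). -/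
noncomputable def longestSwitch {Ω : Type*} (X : ℕ → Ω → Bool) (N : ℕ) (ω : Ω) : ℕ :=
  longestSwitchIn X 0 N ω

/-! Let `s = m - 1`. The event says that one of the blocks of `N` tosses starting at
`s, …, s + N` alternates, and each of them does so with probability `2 / 2 ^ N`. Classify an
alternating block by where its maximal alternating extension to the left begins: either at `s`
itself, or just after a repeat `X j = X (j + 1)` with `s ≤ j`; a repeat followed by `N`
alternating tosses has probability `1 / 2 ^ N`. For start points `s, …, s + N` the block at `s`
and the `N` repeat events with `j < s + N` cover the event, giving `(N + 2) / 2 ^ N`. For start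
points `s, …, s + N - 1` the corresponding `N` events are pairwise disjoint, because a repeat
cannot lie inside an alternating block, giving `(N + 1) / 2 ^ N`. -/

open Finset

section FairCoins

variable {Ω ι : Type*} {X : ι → Ω → Bool}

lemma setOf_forall_mem_eq (I : Finset ι) (g : ι → Bool) :
    {ω | ∀ i ∈ I, X i ω = g i} = ⋂ i ∈ I, {ω | X i ω = g i} := by
  ext; simp

variable [MeasurableSpace Ω] {P : Measure Ω}

lemma measurableSet_forall_mem_eq (hmeas : ∀ i, Measurable (X i)) (I : Finset ι) (g : ι → Bool) :
    MeasurableSet {ω | ∀ i ∈ I, X i ω = g i} := by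
  rw [setOf_forall_mem_eq]
  exact I.measurableSet_biInter fun i _ => hmeas i (measurableSet_singleton (g i))

lemma measureReal_forall_mem_eq (hindep : iIndepFun X P)
    (hfair : ∀ i b, P {ω | X i ω = b} = 1 / 2) (I : Finset ι) (g : ι → Bool) :
    P.real {ω | ∀ i ∈ I, X i ω = g i} = 1 / 2 ^ #I := by
  rw [measureReal_def, setOf_forall_mem_eq,
    hindep.meas_biInter (s := fun i => {ω | X i ω = g i})
      fun i _ => ⟨{g i}, measurableSet_singleton _, rfl⟩,
    prod_eq_pow_card fun i _ => hfair i (g i)]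
  simp

variable [IsFiniteMeasure P]

lemma measureReal_exists_forall_mem_eq_xor (hmeas : ∀ i, Measurable (X i))
    (hindep : iIndepFun X P) (hfair : ∀ i b, P {ω | X i ω = b} = 1 / 2)
    {I : Finset ι} (hI : I.Nonempty) (c : ι → Bool) :
    P.real {ω | ∃ b, ∀ i ∈ I, X i ω = xor b (c i)} = 2 / 2 ^ #I := by
  obtain ⟨i₀, hi₀⟩ := hI
  have hsplit : {ω | ∃ b, ∀ i ∈ I, X i ω = xor b (c i)} =
      {ω | ∀ i ∈ I, X i ω = xor false (c i)} ∪ {ω | ∀ i ∈ I, X i ω = xor true (c i)} := by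
    ext ω
    simp [Bool.exists_bool]
  have hdisj : Disjoint {ω | ∀ i ∈ I, X i ω = xor false (c i)}
      {ω | ∀ i ∈ I, X i ω = xor true (c i)} :=
    Set.disjoint_left.mpr fun ω h₀ h₁ => by simpa using (h₀ i₀ hi₀).symm.trans (h₁ i₀ hi₀)
  rw [hsplit, measureReal_union hdisj (measurableSet_forall_mem_eq hmeas I _),
    measureReal_forall_mem_eq hindep hfair, measureReal_forall_mem_eq hindep hfair]
  ring

end FairCoins

section Switches

variable {Ω : Type*} {X : ℕ → Ω → Bool} {ω : Ω}

/-- An alternating block of `k` switches starting at `j + 1` that cannot be extended to the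
left. -/
def AltBlockAfterRepeat (X : ℕ → Ω → Bool) (ω : Ω) (j k : ℕ) : Prop :=
  X j ω = X (j + 1) ω ∧ AltBlock X ω (j + 1) k

lemma AltBlock.mono {a k k' : ℕ} (h : AltBlock X ω a k) (hk : k' ≤ k) : AltBlock X ω a k' :=
  fun i hai hik => h i hai (by omega)

lemma altBlock_iff_exists_forall_eq_xor_bodd {a k : ℕ} :
    AltBlock X ω a k ↔ ∃ b, ∀ i ∈ Icc a (a + k), X i ω = xor b i.bodd := by
  constructor
  · intro h
    refine ⟨xor (X a ω) a.bodd, fun i hi => ?_⟩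
    obtain ⟨d, rfl⟩ := Nat.exists_eq_add_of_le (mem_Icc.mp hi).1
    induction d with
    | zero => simp
    | succ d ih =>
      have hi := mem_Icc.1 hi
      have hne := h (a + d) (by omega) (by omega)
      rw [← add_assoc, Nat.bodd_succ, Bool.eq_not_iff.mpr hne.symm, ih (mem_Icc.2 (by omega))]
      simp
  · rintro ⟨b, hb⟩ i hai hik
    rw [hb i (mem_Icc.2 (by omega)), hb (i + 1) (mem_Icc.2 (by omega)), Nat.bodd_succ]
    cases b <;> cases i.bodd <;> decide

lemma altBlockAfterRepeat_iff_exists_forall_eq_xor_bodd {j k : ℕ} :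
    AltBlockAfterRepeat X ω j k ↔
      ∃ b, ∀ i ∈ Icc j (j + 1 + k), X i ω = xor b (max i (j + 1)).bodd := by
  rw [AltBlockAfterRepeat, altBlock_iff_exists_forall_eq_xor_bodd]
  constructor
  · rintro ⟨hrep, b, hb⟩
    refine ⟨b, fun i hi => ?_⟩
    have hi := mem_Icc.1 hi
    rcases eq_or_lt_of_le hi.1 with rfl | hji
    · rw [hrep, hb (j + 1) (mem_Icc.2 (by omega)), max_eq_right (by omega)]
    · rw [hb i (mem_Icc.2 (by omega)), max_eq_left (by omega)]
  · rintro ⟨b, hb⟩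
    refine ⟨?_, b, fun i hi => ?_⟩
    · rw [hb j (mem_Icc.2 (by omega)), hb (j + 1) (mem_Icc.2 (by omega)),
        max_eq_right (by omega), max_self]
    · have hi := mem_Icc.1 hi
      rw [hb i (mem_Icc.2 (by omega)), max_eq_left hi.1]

lemma AltBlock.not_altBlockAfterRepeat {a j k k' : ℕ} (h : AltBlock X ω a k)
    (hj : j ∈ Ico a (a + k)) : ¬AltBlockAfterRepeat X ω j k' :=
  fun hrep => h j (mem_Ico.1 hj).1 (mem_Ico.1 hj).2 hrep.1

lemma le_longestSwitchIn_iff {s n k : ℕ} (hn : 0 < n) :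
    k ≤ longestSwitchIn X s n ω ↔ ∃ a, s ≤ a ∧ a + k + 1 ≤ s + n ∧ AltBlock X ω a k := by
  rw [longestSwitchIn]
  set S := {k | ∃ a, s ≤ a ∧ a + k + 1 ≤ s + n ∧ AltBlock X ω a k}
  have hbdd : BddAbove S := ⟨n, by rintro k ⟨a, hsa, hk, -⟩; omega⟩
  have hne : S.Nonempty := ⟨0, s, le_rfl, by omega, fun i _ _ => by omega⟩
  constructor
  · intro hk
    obtain ⟨a, hsa, han, hblock⟩ := Nat.sSup_mem hne hbdd
    exact ⟨a, hsa, by omega, hblock.mono hk⟩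
  · exact fun hk => le_csSup hbdd hk

lemma AltBlock.or_exists_altBlockAfterRepeat {a b k : ℕ} (h : AltBlock X ω b k) (hab : a ≤ b) :
    AltBlock X ω a k ∨ ∃ j ∈ Ico a b, AltBlockAfterRepeat X ω j k := by
  induction b, hab using Nat.le_induction with
  | base => exact .inl h
  | succ b hab ih =>
    by_cases hrep : X b ω = X (b + 1) ω
    · exact .inr ⟨b, mem_Ico.2 (by omega), hrep, h⟩
    · have hext : AltBlock X ω b k := fun i hbi hik => by
        rcases eq_or_lt_of_le hbi with rfl | hbi
        · exact hrep
        · exact h i hbi (by omega)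
      rcases ih hext with h' | ⟨j, hj, hj'⟩
      · exact .inl h'
      · exact .inr ⟨j, Ico_subset_Ico_right b.le_succ hj, hj'⟩

lemma biUnion_altBlock_eq (s n k : ℕ) :
    ⋃ a ∈ Icc s (s + n), {ω | AltBlock X ω a k} =
      {ω | AltBlock X ω s k} ∪ ⋃ j ∈ Ico s (s + n), {ω | AltBlockAfterRepeat X ω j k} := by
  ext ω
  simp only [Set.mem_iUnion, Set.mem_union, Set.mem_ofPred_eq, exists_prop, mem_Icc]
  constructor
  · rintro ⟨a, ⟨hsa, han⟩, h⟩
    rcases h.or_exists_altBlockAfterRepeat hsa with h | ⟨j, hj, hrep⟩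
    · exact .inl h
    · exact .inr ⟨j, Ico_subset_Ico_right (by omega) hj, hrep⟩
  · rintro (h | ⟨j, hj, -, h⟩)
    · exact ⟨s, by omega, h⟩
    · exact ⟨j + 1, by rw [mem_Ico] at hj; omega, h⟩

end Switches

section WindowProbability

variable {Ω : Type*} [MeasurableSpace Ω] {P : Measure Ω} {X : ℕ → Ω → Bool}

lemma measurableSet_altBlock (hmeas : ∀ i, Measurable (X i)) (a k : ℕ) :
    MeasurableSet {ω | AltBlock X ω a k} := by
  unfold AltBlock; measurability

lemma measurableSet_altBlockAfterRepeat (hmeas : ∀ i, Measurable (X i)) (j k : ℕ) :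
    MeasurableSet {ω | AltBlockAfterRepeat X ω j k} := by
  unfold AltBlockAfterRepeat AltBlock; measurability

variable [IsFiniteMeasure P]

lemma measureReal_altBlock (hmeas : ∀ i, Measurable (X i)) (hindep : iIndepFun X P)
    (hfair : ∀ i b, P {ω | X i ω = b} = 1 / 2) (a k : ℕ) :
    P.real {ω | AltBlock X ω a k} = 2 / 2 ^ (k + 1) := by
  simp_rw [altBlock_iff_exists_forall_eq_xor_bodd]
  rw [measureReal_exists_forall_mem_eq_xor hmeas hindep hfair (nonempty_Icc.2 (by omega)) Nat.bodd,
    Nat.card_Icc, show a + k + 1 - a = k + 1 by omega]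

lemma measureReal_altBlockAfterRepeat (hmeas : ∀ i, Measurable (X i)) (hindep : iIndepFun X P)
    (hfair : ∀ i b, P {ω | X i ω = b} = 1 / 2) (j k : ℕ) :
    P.real {ω | AltBlockAfterRepeat X ω j k} = 1 / 2 ^ (k + 1) := by
  simp_rw [altBlockAfterRepeat_iff_exists_forall_eq_xor_bodd]
  rw [measureReal_exists_forall_mem_eq_xor hmeas hindep hfair (nonempty_Icc.2 (by omega))
    (fun i => (max i (j + 1)).bodd), Nat.card_Icc, show j + 1 + k + 1 - j = k + 2 by omega]
  field_simp
  ring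

lemma measureReal_biUnion_altBlock_le (hmeas : ∀ i, Measurable (X i)) (hindep : iIndepFun X P)
    (hfair : ∀ i b, P {ω | X i ω = b} = 1 / 2) (s n k : ℕ) :
    P.real (⋃ a ∈ Icc s (s + n), {ω | AltBlock X ω a k}) ≤ (n + 2) / 2 ^ (k + 1) := by
  rw [biUnion_altBlock_eq]
  calc _ ≤ P.real {ω | AltBlock X ω s k} +
        ∑ j ∈ Ico s (s + n), P.real {ω | AltBlockAfterRepeat X ω j k} :=
        (measureReal_union_le _ _).trans (add_le_add le_rfl (measureReal_biUnion_finset_le _ _))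
    _ = (n + 2) / 2 ^ (k + 1) := by
        simp only [measureReal_altBlock hmeas hindep hfair,
          measureReal_altBlockAfterRepeat hmeas hindep hfair, sum_const, Nat.card_Ico,
          Nat.add_sub_cancel_left, nsmul_eq_mul]
        ring

/-- For `n ≤ k` the events of `biUnion_altBlock_eq` are disjoint: the alternating block of each
covers the repeat of any later one. -/
lemma measureReal_biUnion_altBlock_of_le (hmeas : ∀ i, Measurable (X i))
    (hindep : iIndepFun X P) (hfair : ∀ i b, P {ω | X i ω = b} = 1 / 2) {s n k : ℕ}
    (hnk : n ≤ k) :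
    P.real (⋃ a ∈ Icc s (s + n), {ω | AltBlock X ω a k}) = (n + 2) / 2 ^ (k + 1) := by
  have hdisj : Disjoint {ω | AltBlock X ω s k}
      (⋃ j ∈ Ico s (s + n), {ω | AltBlockAfterRepeat X ω j k}) := by
    refine Set.disjoint_left.2 fun ω h hrep => ?_
    obtain ⟨j, hj, hrep⟩ := Set.mem_iUnion₂.1 hrep
    exact h.not_altBlockAfterRepeat (Ico_subset_Ico_right (by omega) hj) hrep
  have hpair : (Ico s (s + n) : Set ℕ).PairwiseDisjoint
      fun j => {ω | AltBlockAfterRepeat X ω j k} := by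
    intro i hi j hj hij
    wlog hlt : i < j generalizing i j
    · exact (this hj hi hij.symm (by omega)).symm
    refine Set.disjoint_left.2 fun ω hrep hrep' => ?_
    simp only [coe_Ico, Set.mem_Ico] at hi hj
    exact hrep.2.not_altBlockAfterRepeat (mem_Ico.2 (by omega)) hrep'
  rw [biUnion_altBlock_eq, measureReal_union hdisj
      (Finset.measurableSet_biUnion _ fun j _ => measurableSet_altBlockAfterRepeat hmeas j k)
      (h₂ := measure_ne_top _ _),
    measureReal_biUnion_finset hpair fun j _ => measurableSet_altBlockAfterRepeat hmeas j k]
  simp only [measureReal_altBlock hmeas hindep hfair,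
    measureReal_altBlockAfterRepeat hmeas hindep hfair, sum_const, Nat.card_Ico,
    Nat.add_sub_cancel_left, nsmul_eq_mul]
  ring

end WindowProbability

lemma setOf_le_longestSwitchIn_eq_biUnion {Ω : Type*} (X : ℕ → Ω → Bool) (s n k : ℕ) :
    {ω | k ≤ longestSwitchIn X s (k + 1 + n) ω} = ⋃ a ∈ Icc s (s + n), {ω | AltBlock X ω a k} := by
  ext ω
  simp only [Set.mem_ofPred_eq, Set.mem_iUnion, mem_Icc, exists_prop,
    le_longestSwitchIn_iff (by omega : 0 < k + 1 + n)]
  constructor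
  · rintro ⟨a, hsa, han, h⟩; exact ⟨a, ⟨hsa, by omega⟩, h⟩
  · rintro ⟨a, ⟨hsa, han⟩, h⟩; exact ⟨a, hsa, by omega, h⟩

theorem prob_window_longestSwitch_ge_general {Ω : Type*} [MeasurableSpace Ω] (P : Measure Ω) [IsProbabilityMeasure P]
    (X : ℕ → Ω → Bool) (hmeas : ∀ i, Measurable (X i))
    (hindep : iIndepFun X P)
    (hfair : ∀ i b, P {ω | X i ω = b} = 1 / 2)
    (N m : ℕ) (hN : 1 ≤ N) :
    (N + 1 : ℝ) / 2 ^ N ≤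
        (P {ω | N - 1 ≤ longestSwitchIn X (m - 1) (2 * N) ω}).toReal ∧
      (P {ω | N - 1 ≤ longestSwitchIn X (m - 1) (2 * N) ω}).toReal ≤ (N + 2 : ℝ) / 2 ^ N := by
  obtain ⟨k, rfl⟩ : ∃ k, N = k + 1 := ⟨N - 1, by omega⟩
  set s := m - 1
  have hevent : {ω | k + 1 - 1 ≤ longestSwitchIn X s (2 * (k + 1)) ω} =
      ⋃ a ∈ Icc s (s + (k + 1)), {ω | AltBlock X ω a k} := by
    rw [Nat.add_sub_cancel, two_mul, setOf_le_longestSwitchIn_eq_biUnion]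
  rw [← measureReal_def, hevent]
  constructor
  · calc _ = P.real (⋃ a ∈ Icc s (s + k), {ω | AltBlock X ω a k}) := by
          rw [measureReal_biUnion_altBlock_of_le hmeas hindep hfair le_rfl]; push_cast; ring
      _ ≤ _ := measureReal_mono
          (Set.iUnion₂_mono' fun a ha => ⟨a, Icc_subset_Icc_right (by omega) ha, le_rfl⟩)
          (measure_ne_top _ _)
  · calc _ ≤ ((k + 1 : ℕ) + 2 : ℝ) / 2 ^ (k + 1) :=
          measureReal_biUnion_altBlock_le hmeas hindep hfair s (k + 1) k
      _ = _ := by push_cast; ring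

/-- For `N ≥ 1` and `m ≥ 1` (1-based start `m`, i.e. 0-based start `m - 1`),
`(N+1)/2^N ≤ P(M_{2N}^{(m)} ≥ N − 1) ≤ (N+2)/2^N`, where the event is that some block
of `N` consecutive tosses within `X_m, …, X_{m+2N−1}` is alternating. -/
theorem prob_window_longestSwitch_ge {Ω : Type*} [MeasurableSpace Ω] (P : Measure Ω) [IsProbabilityMeasure P]
    (X : ℕ → Ω → Bool) (hmeas : ∀ i, Measurable (X i))
    (hindep : iIndepFun X P)
    (hfair : ∀ i b, P {ω | X i ω = b} = 1 / 2)
    (N m : ℕ) (hN : 1 ≤ N) (hm : 1 ≤ m) :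
    (N + 1 : ℝ) / 2 ^ N ≤
        (P {ω | N - 1 ≤ longestSwitchIn X (m - 1) (2 * N) ω}).toReal ∧
      (P {ω | N - 1 ≤ longestSwitchIn X (m - 1) (2 * N) ω}).toReal ≤ (N + 2 : ℝ) / 2 ^ N :=
  prob_window_longestSwitch_ge_general P X hmeas hindep hfair N m hN
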